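/- For every nonnegative integer m and every complex number a such that all terms are defined, the following identity of power series holds: ₂F₁(a, −a−m; 1/2−m; z)² + C · z^{2m+1} · ₂F₁(a+m+1/2, 1/2−a; m+3/2; z)² = ₃F₂(2a, −2a−2m, −m; 1/2−m, −2m; z), where C = (a+1/2)_m² (a)_{m+1}² / ((1/2)_m² (1/2)_{m+1}²), and the ₃F₂ series is interpreted as the terminating sum Σ_{k=0}^{m} (2a)_k(−2a−2m)_k(−m)_k / ((1/2−m)_k(−2m)_k k!) z^k. -/

import Mathlib

/-!
Write `₂F₁(α, β; γ; z)² = ∑ c_k z^k`. When `γ = α + β + 1/2`, a WZ-style telescoping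
certificate gives Clausen's recurrence `(k+1)(γ+k)(2α+2β+k) c_{k+1} = (2α+k)(2β+k)(α+β+k) c_k`.
For `α = a`, `β = -a-m` it produces the `₃F₂` coefficients up to `k = 2m` (they vanish beyond
`k = m`). At `k = 2m` the recurrence degenerates; `c_{2m+1} = -C` is found by perturbing `β` and
`γ` by `ε` and letting `ε → 0`. From `2m+1` on the recurrence agrees with that of the second
square (`α = a+m+1/2`, `β = 1/2-a`), so the tail of the first square is `-C z^{2m+1}` times the
second square.
-/

/-- Pochhammer symbol (rising factorial). -/
noncomputable def poch (x : ℂ) (n : ℕ) : ℂ := (ascPochhammer ℂ n).eval x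

/-- The Gauss hypergeometric series `₂F₁(a,b;c;z)` (as a sum, convergent for `‖z‖ < 1`). -/
noncomputable def hyp2F1 (a b c z : ℂ) : ℂ :=
  ∑' k : ℕ, poch a k * poch b k / (poch c k * (Nat.factorial k : ℂ)) * z ^ k

open Finset Nat

lemma poch_zero (x : ℂ) : poch x 0 = 1 := by simp [poch]

lemma poch_succ (x : ℂ) (n : ℕ) : poch x (n + 1) = poch x n * (x + n) :=
  ascPochhammer_succ_eval n x

lemma poch_add (x : ℂ) (m n : ℕ) : poch x (m + n) = poch x m * poch (x + m) n := by
  induction n with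
  | zero => simp [poch_zero]
  | succ n ih => rw [← add_assoc, poch_succ, poch_succ, ih]; push_cast; ring

lemma poch_one (n : ℕ) : poch 1 n = n ! := ascPochhammer_eval_one ℂ n

lemma poch_neg (x : ℂ) (n : ℕ) : poch (-x) n = (-1) ^ n * poch (x - n + 1) n := by
  rw [poch, ascPochhammer_eval_neg_eq_descPochhammer, descPochhammer_eval_eq_ascPochhammer, poch]

lemma poch_two_mul (x : ℂ) (n : ℕ) :
    poch (2 * x) (2 * n) = 4 ^ n * poch x n * poch (x + 1/2) n := by
  induction n with
  | zero => simp [poch_zero]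
  | succ n ih =>
    rw [show 2 * (n + 1) = 2 * n + 1 + 1 by ring, poch_succ, poch_succ, ih, poch_succ, poch_succ]
    push_cast; ring

lemma factorial_two_mul (n : ℕ) : ((2 * n) ! : ℂ) = 4 ^ n * n ! * poch (1/2) n := by
  rw [← poch_one, ← poch_one, show (1 : ℂ) = 2 * (1/2) by norm_num, poch_two_mul]
  norm_num
  ring

lemma poch_ne_zero {x : ℂ} {n : ℕ} (hx : ∀ i < n, x + i ≠ 0) : poch x n ≠ 0 := by
  rw [poch, Ne, ascPochhammer_eval_eq_zero_iff]
  rintro ⟨k, hkn, hk⟩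
  exact hx k hkn (by rw [hk]; ring)

lemma poch_neg_natCast_of_lt {m n : ℕ} (h : m < n) : poch (-m) n = 0 :=
  ascPochhammer_eval_neg_coe_nat_of_lt h

@[fun_prop]
lemma continuous_poch (n : ℕ) : Continuous fun x => poch x n := Polynomial.continuous _

lemma half_add_intCast_ne_zero {K : Type*} [Field K] [CharZero K] (n : ℤ) : (1/2 : K) + n ≠ 0 := by
  intro h
  have : ((2 * n + 1 : ℤ) : K) = 0 := by push_cast; linear_combination 2 * h
  have := Int.cast_eq_zero.mp this
  omega

lemma half_sub_natCast_add_ne_zero (m i : ℕ) : (1/2 - m : ℂ) + i ≠ 0 := by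
  convert half_add_intCast_ne_zero (K := ℂ) (i - m) using 1
  push_cast; ring

lemma natCast_add_three_halves_add_ne_zero (m i : ℕ) : (m + 3/2 : ℂ) + i ≠ 0 := by
  convert half_add_intCast_ne_zero (K := ℂ) (m + 1 + i) using 1
  push_cast; ring

lemma poch_half_ne_zero (n : ℕ) : poch (1/2) n ≠ 0 :=
  poch_ne_zero fun i _ => by simpa using half_add_intCast_ne_zero (K := ℂ) i

noncomputable def hypCoeff (α β γ : ℂ) (i : ℕ) : ℂ := poch α i * poch β i / (poch γ i * i !)

noncomputable def sqCoeff (α β γ : ℂ) (k : ℕ) : ℂ :=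
  ∑ p ∈ antidiagonal k, hypCoeff α β γ p.1 * hypCoeff α β γ p.2

lemma sqCoeff_zero (α β γ : ℂ) : sqCoeff α β γ 0 = 1 := by
  simp [sqCoeff, hypCoeff, poch_zero]

section Coefficients

variable {α β γ : ℂ} (hγ : ∀ i : ℕ, γ + i ≠ 0)
include hγ

lemma hypCoeff_succ (i : ℕ) :
    hypCoeff α β γ (i + 1) = (α + i) * (β + i) / ((γ + i) * (i + 1)) * hypCoeff α β γ i := by
  have : poch γ i ≠ 0 := poch_ne_zero fun j _ => hγ j
  rw [hypCoeff, hypCoeff, poch_succ, poch_succ, poch_succ, factorial_succ]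
  push_cast
  field_simp [hγ i]

lemma one_le_radius_ordinaryHypergeometricSeries :
    1 ≤ (ordinaryHypergeometricSeries ℂ α β γ).radius := by
  by_cases h : ∀ k : ℕ, (k : ℂ) ≠ -α ∧ (k : ℂ) ≠ -β
  · refine (ordinaryHypergeometricSeries_radius_eq_one ℂ α β γ fun k => ⟨(h k).1, (h k).2, ?_⟩).ge
    exact fun hk => hγ k (by rw [hk]; ring)
  · simp only [not_forall, not_and_or, not_not] at h
    obtain ⟨k, hk | hk⟩ := h
    · rw [show α = -k by rw [hk]; ring, ordinaryHypergeometric_radius_top_of_neg_nat₁]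
      exact le_top
    · rw [show β = -k by rw [hk]; ring, ordinaryHypergeometric_radius_top_of_neg_nat₂]
      exact le_top

lemma summable_norm_hypCoeff_mul_pow {z : ℂ} (hz : ‖z‖ < 1) :
    Summable fun i => ‖hypCoeff α β γ i * z ^ i‖ := by
  have hz' : z ∈ Metric.eball (0 : ℂ) (ordinaryHypergeometricSeries ℂ α β γ).radius := by
    refine Metric.eball_subset_eball (one_le_radius_ordinaryHypergeometricSeries hγ) ?_
    rw [Metric.mem_eball, edist_zero_right, ← ENNReal.coe_one, enorm_lt_coe, ← NNReal.coe_lt_coe]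
    simpa using hz
  refine ((ordinaryHypergeometricSeries ℂ α β γ).summable_norm_apply hz').congr fun i => ?_
  rw [ordinaryHypergeometricSeries_apply_eq, hypCoeff, smul_eq_mul, poch, poch, poch]
  ring_nf

lemma hasSum_sqCoeff_mul_pow {z : ℂ} (hz : ‖z‖ < 1) :
    HasSum (fun k => sqCoeff α β γ k * z ^ k) (hyp2F1 α β γ z ^ 2) := by
  have hs := summable_norm_hypCoeff_mul_pow (α := α) (β := β) hγ hz
  have hterm : ∀ k, ∑ p ∈ antidiagonal k, hypCoeff α β γ p.1 * z ^ p.1 *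
      (hypCoeff α β γ p.2 * z ^ p.2) = sqCoeff α β γ k * z ^ k := by
    intro k
    rw [sqCoeff, sum_mul]
    refine sum_congr rfl fun p hp => ?_
    rw [← mem_antidiagonal.mp hp, pow_add]
    ring
  have hsq : hyp2F1 α β γ z ^ 2 = ∑' k, sqCoeff α β γ k * z ^ k := by
    rw [sq, show hyp2F1 α β γ z = ∑' i, hypCoeff α β γ i * z ^ i from rfl,
      tsum_mul_tsum_eq_tsum_sum_antidiagonal_of_summable_norm hs hs]
    exact tsum_congr hterm
  rw [hsq]
  exact ((summable_norm_sum_mul_antidiagonal_of_summable_norm hs hs).of_norm.congr hterm).hasSum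

end Coefficients

/-- A WZ-style certificate: `t ↦ clausenCert α β k t` telescopes the recurrence of `sqCoeff`. -/
noncomputable def clausenCert (α β k t : ℂ) : ℂ :=
  t * (1 + 3/2 * k - (α + β) * (1 + 3 * k) - 2 * (α + β) ^ 2) - 3 * (1 + k) * t ^ 2 + 2 * t ^ 3

section ClausenRecurrence

variable {α β γ : ℂ} (hαβ : γ = α + β + 1/2) (hγ : ∀ i : ℕ, γ + i ≠ 0)
include hαβ hγ

lemma clausenCert_telescope {i j k : ℕ} (hk : i + j = k) :
    (k + 1) * (γ + k) * (2 * α + 2 * β + k) * (hypCoeff α β γ i * hypCoeff α β γ (j + 1)) -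
        (2 * α + k) * (2 * β + k) * (α + β + k) * (hypCoeff α β γ i * hypCoeff α β γ j) =
      clausenCert α β k (i + 1) * hypCoeff α β γ (i + 1) * hypCoeff α β γ j -
        clausenCert α β k i * hypCoeff α β γ i * hypCoeff α β γ (j + 1) := by
  subst hk
  rw [hypCoeff_succ hγ i, hypCoeff_succ hγ j, clausenCert, clausenCert]
  have := hγ i
  have := hγ j
  have := cast_add_one_ne_zero (R := ℂ) i
  have := cast_add_one_ne_zero (R := ℂ) j
  field_simp
  subst hαβ
  push_cast
  ring

lemma sqCoeff_succ (k : ℕ) :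
    (k + 1) * (γ + k) * (2 * α + 2 * β + k) * sqCoeff α β γ (k + 1) =
      (2 * α + k) * (2 * β + k) * (α + β + k) * sqCoeff α β γ k := by
  set A := hypCoeff α β γ
  set f : ℕ × ℕ → ℂ := fun p => clausenCert α β k p.1 * A p.1 * A p.2
  -- both sums are `∑ p ∈ antidiagonal (k + 1), f p` less a boundary term, and `f (0, k + 1) = 0`
  have hsum : ∑ p ∈ antidiagonal k, clausenCert α β k (p.1 + 1) * A (p.1 + 1) * A p.2 -
      ∑ p ∈ antidiagonal k, clausenCert α β k p.1 * A p.1 * A (p.2 + 1) =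
        clausenCert α β k (k + 1) * A (k + 1) * A 0 := by
    have h1 := Nat.sum_antidiagonal_succ (n := k) (f := f)
    have h2 := Nat.sum_antidiagonal_succ' (n := k) (f := f)
    have hzero : clausenCert α β k 0 = 0 := by simp [clausenCert]
    simp only [f, Nat.cast_zero, hzero, zero_mul, zero_add] at h1 h2
    push_cast at h1 h2
    linear_combination h2 - h1
  have hcert : clausenCert α β k (k + 1) = -((k + 1) * (γ + k) * (2 * α + 2 * β + k)) := by
    rw [clausenCert, hαβ]; ring
  have htel := sum_congr (s₁ := antidiagonal k) rfl fun p hp =>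
    clausenCert_telescope hαβ hγ (mem_antidiagonal.mp hp)
  rw [sum_sub_distrib, sum_sub_distrib] at htel
  rw [sqCoeff, sqCoeff, Nat.sum_antidiagonal_succ', mul_add, mul_sum, mul_sum]
  linear_combination htel + hsum + A (k + 1) * A 0 * hcert

/-- Clausen's identity `₂F₁(α, β; α + β + 1/2; z)² = ₃F₂(2α, 2β, α + β; 2α + 2β, α + β + 1/2; z)`,
coefficientwise. -/
lemma factorial_mul_poch_mul_sqCoeff (k : ℕ) :
    k ! * poch γ k * poch (2 * α + 2 * β) k * sqCoeff α β γ k =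
      poch (2 * α) k * poch (2 * β) k * poch (α + β) k := by
  induction k with
  | zero => simp [poch_zero, sqCoeff_zero]
  | succ k ih =>
    simp only [factorial_succ, poch_succ]
    push_cast
    linear_combination (k ! * poch γ k * poch (2 * α + 2 * β) k) * sqCoeff_succ hαβ hγ k +
      (2 * α + k) * (2 * β + k) * (α + β + k) * ih

end ClausenRecurrence

lemma continuous_sqCoeff {X : Type*} [TopologicalSpace X] {f g h : X → ℂ} (hf : Continuous f)
    (hg : Continuous g) (hh : Continuous h) (hγ : ∀ x, ∀ i : ℕ, h x + i ≠ 0) (k : ℕ) :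
    Continuous fun x => sqCoeff (f x) (g x) (h x) k := by
  have hA : ∀ i, Continuous fun x => hypCoeff (f x) (g x) (h x) i := fun i =>
    Continuous.div (by fun_prop) (by fun_prop) fun x =>
      mul_ne_zero (poch_ne_zero fun j _ => hγ x j) (cast_ne_zero.mpr (factorial_ne_zero i))
  exact continuous_finsetSum _ fun p _ => (hA p.1).mul (hA p.2)

lemma eq_of_mul_succ_eq {M : Type*} [MulZeroClass M] [IsLeftCancelMulZero M] {u v p q : ℕ → M}
    (hp : ∀ k, p k ≠ 0) (hu : ∀ k, p k * u (k + 1) = q k * u k)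
    (hv : ∀ k, p k * v (k + 1) = q k * v k) (h0 : u 0 = v 0) (k : ℕ) : u k = v k := by
  induction k with
  | zero => exact h0
  | succ k ih => exact mul_left_cancel₀ (hp k) (by rw [hu, hv, ih])

section Dihedral

variable (m : ℕ) (a : ℂ)

noncomputable def clausenCoeff (k : ℕ) : ℂ :=
  poch (2 * a) k * poch (-2 * a - 2 * m) k * poch (-m) k /
    (poch (1/2 - m) k * poch (-2 * m) k * k !)

noncomputable def clausenConst : ℂ :=
  poch (a + 1/2) m ^ 2 * poch a (m + 1) ^ 2 / (poch (1/2) m ^ 2 * poch (1/2) (m + 1) ^ 2)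

lemma sqCoeff_eq_clausenCoeff {k : ℕ} (hk : k ≤ 2 * m) :
    sqCoeff a (-a - m) (1/2 - m) k = clausenCoeff m a k := by
  have h := factorial_mul_poch_mul_sqCoeff (α := a) (β := -a - m) (by ring)
    (half_sub_natCast_add_ne_zero m) k
  rw [show 2 * a + 2 * (-a - m) = -2 * (m : ℂ) by ring, show 2 * (-a - m) = -2 * a - 2 * m by ring,
    show a + (-a - m) = -(m : ℂ) by ring] at h
  have hden : poch (1/2 - m) k * poch (-2 * (m : ℂ)) k * k ! ≠ 0 := by
    refine mul_ne_zero (mul_ne_zero (poch_ne_zero fun i _ => half_sub_natCast_add_ne_zero m i)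
      (poch_ne_zero fun i hi => ?_)) (cast_ne_zero.mpr (factorial_ne_zero k))
    have : ((2 * m - i : ℕ) : ℂ) ≠ 0 := cast_ne_zero.mpr (by omega)
    rw [cast_sub (by omega)] at this
    push_cast at this
    contrapose! this
    linear_combination -this
  rw [clausenCoeff, eq_div_iff hden]
  linear_combination h

lemma clausenCoeff_eq_zero {k : ℕ} (hk : m < k) : clausenCoeff m a k = 0 := by
  rw [clausenCoeff, poch_neg_natCast_of_lt hk]
  simp

lemma sum_range_sqCoeff_mul_pow (z : ℂ) :
    ∑ k ∈ range (2 * m + 1), sqCoeff a (-a - m) (1/2 - m) k * z ^ k =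
      ∑ k ∈ range (m + 1), clausenCoeff m a k * z ^ k := by
  rw [sum_congr rfl fun k hk => by
    rw [sqCoeff_eq_clausenCoeff m a (Nat.lt_succ_iff.mp (mem_range.mp hk))]]
  refine (sum_subset (range_subset_range.mpr (by omega)) fun k _ hk => ?_).symm
  rw [clausenCoeff_eq_zero m a (by simpa using hk), zero_mul]

lemma mul_sqCoeff_two_mul_add_one_of_ne_zero {ε : ℂ} (hε : ε ≠ 0)
    (hγ : ∀ i : ℕ, (1/2 - m - ε) + i ≠ 0) :
    2 * (2 * m + 1)! * poch (1/2 - m - ε) (2 * m + 1) * poch (-2 * m - 2 * ε) (2 * m) *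
        sqCoeff a (-a - m - ε) (1/2 - m - ε) (2 * m + 1) =
      poch (2 * a) (2 * m + 1) * poch (-2 * a - 2 * m - 2 * ε) (2 * m + 1) * poch (-m - ε) m *
        poch (1 - ε) m := by
  have h := factorial_mul_poch_mul_sqCoeff (α := a) (β := -a - m - ε) (by ring) hγ (2 * m + 1)
  rw [show 2 * a + 2 * (-a - m - ε) = -2 * m - 2 * ε by ring,
    show 2 * (-a - m - ε) = -2 * a - 2 * m - 2 * ε by ring,
    show a + (-a - m - ε) = -m - ε by ring] at h
  have h1 : poch (-2 * m - 2 * ε) (2 * m + 1) = poch (-2 * m - 2 * ε) (2 * m) * (-2 * ε) := by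
    rw [poch_succ]; push_cast; ring
  have h2 : poch (-m - ε) (2 * m + 1) = poch (-m - ε) m * (-ε) * poch (1 - ε) m := by
    rw [show 2 * m + 1 = m + 1 + m by ring, poch_add, poch_succ,
      show (-m - ε : ℂ) + (m + 1 : ℕ) = 1 - ε by push_cast; ring]
    ring
  rw [h1, h2] at h
  refine mul_left_cancel₀ (neg_ne_zero.mpr hε) ?_
  linear_combination h

/-- Let `ε → 0` in `mul_sqCoeff_two_mul_add_one_of_ne_zero` along `ε = i t`: on that line
`1/2 - m - ε + i` has real part `1/2 - m + i ≠ 0`, so no denominator vanishes. -/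
lemma mul_sqCoeff_two_mul_add_one :
    2 * (2 * m + 1)! * poch (1/2 - m) (2 * m + 1) * poch (-2 * m) (2 * m) *
        sqCoeff a (-a - m) (1/2 - m) (2 * m + 1) =
      poch (2 * a) (2 * m + 1) * poch (-2 * a - 2 * m) (2 * m + 1) * poch (-m) m * poch 1 m := by
  have hγ : ∀ (t : ℝ) (i : ℕ), (1/2 - m - Complex.I * t : ℂ) + i ≠ 0 := fun t i h => by
    have := congrArg Complex.re h
    simp only [Complex.add_re, Complex.sub_re, Complex.mul_re, Complex.I_re, Complex.I_im,
      Complex.ofReal_re, Complex.ofReal_im, Complex.natCast_re, Complex.zero_re,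
      Complex.div_ofNat_re, Complex.one_re] at this
    exact half_add_intCast_ne_zero (K := ℝ) (i - m) (by push_cast; linarith)
  have hcont := continuous_sqCoeff (f := fun t : ℝ => a) (g := fun t => -a - m - Complex.I * t)
    (by fun_prop) (by fun_prop) (by fun_prop) hγ (2 * m + 1)
  have heq := Continuous.ext_on (dense_compl_singleton (0 : ℝ)) (by fun_prop) (by fun_prop)
    fun t (ht : t ≠ 0) => mul_sqCoeff_two_mul_add_one_of_ne_zero m a
      (mul_ne_zero Complex.I_ne_zero (Complex.ofReal_ne_zero.mpr ht)) (hγ t)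
  simpa using congrFun heq 0

lemma sqCoeff_two_mul_add_one : sqCoeff a (-a - m) (1/2 - m) (2 * m + 1) = -clausenConst m a := by
  have key := mul_sqCoeff_two_mul_add_one m a
  have hfact : ((2 * m + 1)! : ℂ) = 2 * 4 ^ m * m ! * poch (1/2) (m + 1) := by
    rw [factorial_succ, cast_mul, factorial_two_mul, poch_succ]; push_cast; ring
  have hhalf : poch (1/2 - m) (2 * m + 1) = (-1) ^ m * poch (1/2) m * poch (1/2) (m + 1) := by
    rw [show 2 * m + 1 = m + (m + 1) by ring, poch_add, show (1/2 - m : ℂ) = -(m - 1/2) by ring,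
      poch_neg]
    norm_num
  have hden : poch (-2 * m) (2 * m) = 4 ^ m * m ! * poch (1/2) m := by
    rw [show (-2 * m : ℂ) = -((2 * m : ℕ) : ℂ) by push_cast; ring, poch_neg, sub_self, zero_add,
      poch_one, factorial_two_mul, pow_mul]
    norm_num
  have hnum : poch (2 * a) (2 * m + 1) = 2 * 4 ^ m * poch a (m + 1) * poch (a + 1/2) m := by
    rw [poch_succ, poch_two_mul, poch_succ]; push_cast; ring
  have hrefl : poch (-2 * a - 2 * m) (2 * m + 1) = -poch (2 * a) (2 * m + 1) := by
    rw [show (-2 * a - 2 * m : ℂ) = -(2 * a + 2 * m) by ring, poch_neg]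
    push_cast
    rw [show 2 * a + 2 * m - (2 * m + 1) + 1 = 2 * a by ring, pow_succ, pow_mul]
    norm_num
  have hm : poch (-m) m = (-1) ^ m * m ! := by
    rw [poch_neg, sub_self, zero_add, poch_one]
  rw [hfact, hhalf, hden, hrefl, hnum, hm, poch_one] at key
  have hD : poch (1/2) m ^ 2 * poch (1/2) (m + 1) ^ 2 ≠ 0 := by
    have := poch_half_ne_zero m
    have := poch_half_ne_zero (m + 1)
    positivity
  have hK : (4 : ℂ) ^ (2 * m + 1) * (-1) ^ m * (m ! : ℂ) ^ 2 ≠ 0 := by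
    have : (m ! : ℂ) ≠ 0 := cast_ne_zero.mpr (factorial_ne_zero m)
    exact mul_ne_zero (mul_ne_zero (by norm_num) (by norm_num)) (pow_ne_zero _ this)
  rw [clausenConst, ← neg_div, eq_div_iff hD]
  refine mul_left_cancel₀ hK ?_
  linear_combination key

lemma sqCoeff_two_mul_add_one_add (j : ℕ) :
    sqCoeff a (-a - m) (1/2 - m) (2 * m + 1 + j) =
      -clausenConst m a * sqCoeff (a + m + 1/2) (1/2 - a) (m + 3/2) j := by
  refine eq_of_mul_succ_eq (u := fun j => sqCoeff a (-a - m) (1/2 - m) (2 * m + 1 + j))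
    (v := fun j => -clausenConst m a * sqCoeff (a + m + 1/2) (1/2 - a) (m + 3/2) j)
    (p := fun j : ℕ => ((j : ℂ) + 1) * (m + 3/2 + j) * (2 * m + 2 + j))
    (q := fun j : ℕ => (2 * a + 2 * m + 1 + j) * (1 - 2 * a + j) * (m + 1 + j)) (fun j => ?_)
    (fun j => ?_) (fun j => ?_) ?_ j
  · have : ((2 * m + 2 + j : ℕ) : ℂ) ≠ 0 := cast_ne_zero.mpr (by omega)
    push_cast at this
    exact mul_ne_zero (mul_ne_zero (cast_add_one_ne_zero j)
      (natCast_add_three_halves_add_ne_zero m j)) this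
  · have := sqCoeff_succ (α := a) (β := -a - m) (by ring) (half_sub_natCast_add_ne_zero m)
      (2 * m + 1 + j)
    rw [← add_assoc]
    push_cast at this ⊢
    linear_combination this
  · have := sqCoeff_succ (α := a + m + 1/2) (β := 1/2 - a) (by ring)
      (natCast_add_three_halves_add_ne_zero m) j
    linear_combination -clausenConst m a * this
  · rw [sqCoeff_zero, add_zero, mul_one, sqCoeff_two_mul_add_one]

end Dihedral

/-- Degenerate (dihedral) Clausen identity, `n = 0` case: for every nonnegative integer `m`
and complex `a`, on the unit disk,
`₂F₁(a,−a−m;1/2−m;z)² + C z^{2m+1} ₂F₁(a+m+1/2,1/2−a;m+3/2;z)²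
  = ₃F₂(2a,−2a−2m,−m;1/2−m,−2m;z)` (terminating sum). -/
theorem dihedral_clausen_n0 (m : ℕ) (a : ℂ) :
    ∀ z : ℂ, ‖z‖ < 1 →
      hyp2F1 a (-a - m) (1/2 - m) z ^ 2 +
        (poch (a + 1/2) m)^2 * (poch a (m+1))^2 /
          ((poch (1/2) m)^2 * (poch (1/2) (m+1))^2) *
          z ^ (2*m+1) * hyp2F1 (a + m + 1/2) (1/2 - a) ((m:ℂ) + 3/2) z ^ 2 =
      ∑ k ∈ Finset.range (m+1),
        poch (2*a) k * poch (-2*a - 2*m) k * poch (-(m:ℂ)) k /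
          (poch (1/2 - m) k * poch (-2*(m:ℂ)) k * (Nat.factorial k : ℂ)) * z ^ k := by
  intro z hz
  have hfirst := hasSum_sqCoeff_mul_pow (α := a) (β := -a - m) (half_sub_natCast_add_ne_zero m) hz
  have hsecond := hasSum_sqCoeff_mul_pow (α := a + m + 1/2) (β := 1/2 - a)
    (natCast_add_three_halves_add_ne_zero m) hz
  have htail :
      HasSum (fun k => sqCoeff a (-a - m) (1/2 - m) (k + (2 * m + 1)) * z ^ (k + (2 * m + 1)))
      (-clausenConst m a * z ^ (2 * m + 1) * hyp2F1 (a + m + 1/2) (1/2 - a) (m + 3/2) z ^ 2) := by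
    refine (hsecond.mul_left (-clausenConst m a * z ^ (2 * m + 1))).congr_fun fun k => ?_
    rw [add_comm k, sqCoeff_two_mul_add_one_add, pow_add]
    ring
  have hsplit := ((hasSum_nat_add_iff' (2 * m + 1)).mpr hfirst).unique htail
  rw [sum_range_sqCoeff_mul_pow] at hsplit
  unfold clausenConst clausenCoeff at hsplit
  linear_combination hsplit
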